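/- arXiv:2003.11287 — 4 statements merged into one kernel-verified Lean document; each statement's English description precedes it below -/
import Mathlib

section
/- Let A be a d×d integer matrix whose characteristic polynomial p is irreducible over ℚ, with eigenvalues θ₁, …, θ_d (over ℂ). If for some n ∈ ℕ one has θ₁ⁿ ≠ θⱼⁿ for all j > 1, then the characteristic polynomial of Aⁿ is irreducible over ℚ. -/
/-!
Let `θ₀` be a root of the irreducible polynomial `p = χ_A`, so `p` is its minimal polynomial. Over
`F = ℚ(θ₀ⁿ)`, every conjugate of `θ₀` is a root of both `p` and `Xⁿ - θ₀ⁿ`, hence equals `θ₀` by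
hypothesis; the minimal polynomial of `θ₀` over `F` being separable, it has degree one, so
`ℚ(θ₀ⁿ) = ℚ(θ₀)` and `θ₀ⁿ` has degree `d` over `ℚ`. Since `θ₀ⁿ` is a root of the monic degree-`d`
polynomial `χ_{Aⁿ}`, the latter is the minimal polynomial of `θ₀ⁿ`, hence irreducible.
-/

open Polynomial IntermediateField

theorem Matrix.isRoot_charpoly_pow {K ι : Type*} [Field K] [Fintype ι] [DecidableEq ι]
    (M : Matrix ι ι K) {μ : K} (h : M.charpoly.IsRoot μ) (n : ℕ) :
    (M ^ n).charpoly.IsRoot (μ ^ n) := by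
  rw [← Matrix.mem_spectrum_iff_isRoot_charpoly] at h ⊢
  exact spectrum.pow_mem_pow M n h

theorem minpoly.mem_range_of_forall_mem_rootSet_eq {F L : Type*} [Field F] [Field L]
    [Algebra F L] [PerfectField F] [IsAlgClosed L] {x : L} (hx : IsIntegral F x)
    (h : ∀ y ∈ (minpoly F x).rootSet L, y = x) : x ∈ (algebraMap F L).range := by
  have hcard : Fintype.card ((minpoly F x).rootSet L) ≤ 1 :=
    Fintype.card_le_one_iff.mpr fun a b => Subtype.ext <| (h a a.2).trans (h b b.2).symm
  rw [card_rootSet_eq_natDegree (PerfectField.separable_of_irreducible (minpoly.irreducible hx))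
    (IsAlgClosed.splits _)] at hcard
  exact minpoly.mem_range_of_degree_eq_one F x <|
    (degree_eq_iff_natDegree_eq (minpoly.ne_zero hx)).mpr
      (hcard.antisymm (minpoly.natDegree_pos hx))

section PowAdjoin

variable {K L : Type*} [Field K] [Field L] [Algebra K L] [CharZero K] [IsAlgClosed L] {x : L}

theorem IntermediateField.adjoin_pow_eq_adjoin (hx : IsIntegral K x) (n : ℕ)
    (h : ∀ y : L, aeval y (minpoly K x) = 0 → y ^ n = x ^ n → y = x) :
    K⟮x ^ n⟯ = K⟮x⟯ := by
  set F := K⟮x ^ n⟯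
  have hxn : x ^ n ∈ F := mem_adjoin_simple_self K (x ^ n)
  have hxint : IsIntegral F x := hx.tower_top
  have hconj : ∀ y ∈ (minpoly F x).rootSet L, y = x := by
    intro y hy
    rw [mem_rootSet_of_ne (minpoly.ne_zero hxint)] at hy
    refine h y ?_ ?_
    · obtain ⟨q, hq⟩ := minpoly.dvd_map_of_isScalarTower K F x
      rw [← aeval_map_algebraMap F, hq, map_mul, hy, zero_mul]
    · obtain ⟨q, hq⟩ := minpoly.dvd F x (p := X ^ n - C ⟨x ^ n, hxn⟩) (by simp)
      simpa [hy, sub_eq_zero] using congrArg (aeval y) hq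
  have hxF : x ∈ F := by
    obtain ⟨z, hz⟩ := minpoly.mem_range_of_forall_mem_rootSet_eq hxint hconj
    exact hz ▸ z.2
  exact le_antisymm (adjoin_simple_le_iff.mpr (pow_mem (mem_adjoin_simple_self K x) n))
    (adjoin_simple_le_iff.mpr hxF)

theorem minpoly.natDegree_pow_eq (hx : IsIntegral K x) (n : ℕ)
    (h : ∀ y : L, Polynomial.aeval y (minpoly K x) = 0 → y ^ n = x ^ n → y = x) :
    (minpoly K (x ^ n)).natDegree = (minpoly K x).natDegree := by
  rw [← adjoin.finrank (hx.pow n), adjoin_pow_eq_adjoin hx n h, adjoin.finrank hx]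

end PowAdjoin

theorem Polynomial.Monic.irreducible_of_aeval_eq_zero_of_natDegree_le {K L : Type*} [Field K]
    [Ring L] [IsDomain L] [Algebra K L] {q : K[X]} (hq : q.Monic) {x : L} (hx : aeval x q = 0)
    (hdeg : q.natDegree ≤ (minpoly K x).natDegree) : Irreducible q := by
  have hint : IsIntegral K x := ⟨q, hq, hx⟩
  rw [eq_of_monic_of_dvd_of_natDegree_le (minpoly.monic hint) hq (minpoly.dvd K x hx) hdeg]
  exact minpoly.irreducible hint

theorem aeval_map_intCastRingHom {K : Type*} [Field K] [CharZero K] (q : ℤ[X]) (z : K) :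
    aeval z (q.map (Int.castRingHom ℚ)) = eval z (q.map (Int.castRingHom K)) := by
  rw [← algebraMap_int_eq, aeval_map_algebraMap, aeval_def, eval_map, algebraMap_int_eq]

theorem stmt0 (d : ℕ) (hd : 1 ≤ d) (A : Matrix (Fin d) (Fin d) ℤ)
    (hirr : Irreducible ((Matrix.charpoly A).map (Int.castRingHom ℚ)))
    (θ : Fin d → ℂ)
    (hfact : (Matrix.charpoly A).map (Int.castRingHom ℂ) =
      ∏ j : Fin d, (X - C (θ j)))
    (n : ℕ)
    (hn : ∀ j : Fin d, j ≠ ⟨0, hd⟩ → θ ⟨0, hd⟩ ^ n ≠ θ j ^ n) :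
    Irreducible ((Matrix.charpoly (A ^ n)).map (Int.castRingHom ℚ)) := by
  set θ₀ := θ ⟨0, hd⟩
  have hdeg (M : Matrix (Fin d) (Fin d) ℤ) :
      (M.charpoly.map (Int.castRingHom ℚ)).natDegree = d := by
    rw [(Matrix.charpoly_monic M).natDegree_map, Matrix.charpoly_natDegree_eq_dim, Fintype.card_fin]
  have hroots (y : ℂ) : aeval y (A.charpoly.map (Int.castRingHom ℚ)) = 0 ↔ ∃ j, θ j = y := by
    rw [aeval_map_intCastRingHom, hfact, eval_prod, Finset.prod_eq_zero_iff]
    simp [sub_eq_zero, eq_comm]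
  have hθ₀ : aeval θ₀ (A.charpoly.map (Int.castRingHom ℚ)) = 0 := (hroots θ₀).mpr ⟨_, rfl⟩
  have hmin := minpoly.eq_of_irreducible_of_monic hirr hθ₀ ((Matrix.charpoly_monic A).map _)
  have hθ₀n : (minpoly ℚ (θ₀ ^ n)).natDegree = d := by
    rw [minpoly.natDegree_pow_eq ⟨_, (Matrix.charpoly_monic A).map _, hθ₀⟩ n, ← hmin, hdeg]
    intro y hy hyn
    obtain ⟨j, rfl⟩ := (hroots y).mp (hmin ▸ hy)
    by_contra hj
    exact hn j (fun h => hj (congrArg θ h)) hyn.symm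
  have hθ₀C : (A.map (Int.castRingHom ℂ)).charpoly.IsRoot θ₀ := by
    rwa [Matrix.charpoly_map, IsRoot, ← aeval_map_intCastRingHom]
  have hθ₀nC := Matrix.isRoot_charpoly_pow _ hθ₀C n
  rw [← Matrix.map_pow, Matrix.charpoly_map, IsRoot, ← aeval_map_intCastRingHom] at hθ₀nC
  exact ((Matrix.charpoly_monic _).map _).irreducible_of_aeval_eq_zero_of_natDegree_le hθ₀nC
    (by rw [hdeg, hθ₀n])
end

section
/- If A is a primitive nonnegative integer d×d matrix (some power of A has all entries strictly positive) with irreducible characteristic polynomial, then for every n ≥ 1 the characteristic polynomial of Aⁿ is irreducible over ℚ. -/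
/-!
By Perron–Frobenius, the primitive matrix `A` has a real eigenvalue `r` whose modulus strictly
exceeds that of every other eigenvalue. The characteristic polynomial `p` of `A` is irreducible,
so it is the minimal polynomial of `r` over `ℚ` and the eigenvalues are the conjugates of `r`.
A conjugate of `r` over `ℚ(rⁿ)` is a root `β` of `p` with `βⁿ = rⁿ`, so `|β| = r` and `β = r`;
hence `ℚ(rⁿ) = ℚ(r)` has degree `d`. The minimal polynomial of `rⁿ` therefore divides the
characteristic polynomial of `Aⁿ`, which is monic of the same degree `d`, and equals it.

For the Perron–Frobenius step simple spectrum suffices: then `Aᵗ = ∑ θᵗ E_θ` grows at most like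
`ρᵗ`, where `ρ` is the largest modulus of an eigenvalue. If `A v = θ v` with `|θ| = ρ`, then
`Aᵏ |v| ≥ ρᵏ |v|` for the positive power `Aᵏ`; a strict inequality anywhere would make `Aᵏ` grow
faster than `ρᵏ`, and equality in the triangle inequality forces `v` to be a scalar multiple of
the nonnegative vector `|v|`, so that `θ ≥ 0`.
-/

open Polynomial IntermediateField Filter Topology Complex ComplexConjugate ComplexOrder

theorem IntermediateField.adjoin_simple_pow_eq_of_forall_root_pow_eq {F L : Type*} [Field F]
    [Field L] [Algebra F L] [IsAlgClosed L] {α : L} (hα : IsSeparable F α) (n : ℕ)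
    (h : ∀ β : L, aeval β (minpoly F α) = 0 → β ^ n = α ^ n → β = α) :
    F⟮α ^ n⟯ = F⟮α⟯ := by
  refine le_antisymm (adjoin_simple_le_iff.2 (pow_mem (mem_adjoin_simple_self F α) n)) ?_
  rw [adjoin_simple_le_iff]
  set K := F⟮α ^ n⟯
  have hαK : IsIntegral K α := (hα.tower_top K).isIntegral
  have hconj : ∀ β ∈ (minpoly K α).rootSet L, β = α := by
    intro β hβ
    have hβ0 := (mem_rootSet.1 hβ).2
    refine h β ?_ ?_
    · rw [← aeval_map_algebraMap K]
      exact aeval_eq_zero_of_dvd_aeval_eq_zero (minpoly.dvd_map_of_isScalarTower F K α) hβ0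
    · have hdvd : minpoly K α ∣ X ^ n - C (AdjoinSimple.gen F (α ^ n)) :=
        minpoly.dvd K α (by simp)
      simpa [sub_eq_zero] using aeval_eq_zero_of_dvd_aeval_eq_zero hdvd hβ0
  have hdeg : (minpoly K α).natDegree = 1 := by
    refine le_antisymm ?_ (minpoly.natDegree_pos hαK)
    rw [← card_rootSet_eq_natDegree (hα.tower_top K)
      (IsAlgClosed.splits ((minpoly K α).map (algebraMap K L)))]
    exact Fintype.card_le_one_iff.2 fun a b => by rw [Subtype.ext_iff, hconj a a.2, hconj b b.2]
  obtain ⟨y, hy⟩ := minpoly.natDegree_eq_one_iff.1 hdeg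
  exact hy ▸ y.2

theorem minpoly.natDegree_pow_eq_of_forall_norm_lt {F L : Type*} [Field F] [NormedField L]
    [IsAlgClosed L] [Algebra F L] {α : L} (hα : IsSeparable F α) {n : ℕ} (hn : n ≠ 0)
    (h : ∀ β : L, Polynomial.aeval β (minpoly F α) = 0 → β ≠ α → ‖β‖ < ‖α‖) :
    (minpoly F (α ^ n)).natDegree = (minpoly F α).natDegree := by
  have hadj := IntermediateField.adjoin_simple_pow_eq_of_forall_root_pow_eq hα n
    fun β hβ hpow => by_contra fun hne =>
      (pow_lt_pow_left₀ (h β hβ hne) (norm_nonneg β) hn).ne (by rw [← norm_pow, ← norm_pow, hpow])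
  rw [← adjoin.finrank (hα.isIntegral.pow n), hadj, adjoin.finrank hα.isIntegral]

lemma le_of_forall_pow_mul_le_mul_pow {y μ ρ C : ℝ} (hy : 0 < y) (hρ : 0 ≤ ρ)
    (h : ∀ t : ℕ, μ ^ t * y ≤ C * ρ ^ t) : μ ≤ ρ := by
  by_contra! hlt
  have hμ : 0 < μ := hρ.trans_lt hlt
  have hlim : Tendsto (fun t : ℕ => C * (ρ / μ) ^ t) atTop (𝓝 0) := by
    simpa using (tendsto_pow_atTop_nhds_zero_of_lt_one (div_nonneg hρ hμ.le)
      ((div_lt_one hμ).2 hlt)).const_mul C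
  have : y ≤ 0 := ge_of_tendsto' hlim fun t => by
    rw [div_pow, mul_div_assoc', le_div_iff₀ (pow_pos hμ t), mul_comm]
    exact h t
  linarith

lemma exists_gt_smul_le_of_forall_lt {ι : Type*} [Finite ι] {ρ : ℝ} {x y : ι → ℝ}
    (h : ∀ i, ρ * y i < x i) : ∃ μ, ρ < μ ∧ μ • y ≤ x := by
  have hnear : ∀ᶠ μ in 𝓝 ρ, ∀ i, μ * y i < x i := eventually_all.2 fun i =>
    ((continuous_id.mul continuous_const).tendsto ρ).eventually (eventually_lt_nhds (h i))
  obtain ⟨μ, hμ, hρμ⟩ := ((hnear.filter_mono nhdsWithin_le_nhds).and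
    (self_mem_nhdsWithin (s := Set.Ioi ρ))).exists
  exact ⟨μ, hρμ, fun i => (hμ i).le⟩

-- With `S` the sum, the real parts of `z i * conj S` add up to `‖S‖ ^ 2` and are bounded by
-- `‖z i‖ * ‖S‖`, so each is attained.
lemma Complex.mul_norm_sum_eq_of_norm_sum_eq {ι : Type*} {s : Finset ι} {z : ι → ℂ}
    (h : ‖∑ j ∈ s, z j‖ = ∑ j ∈ s, ‖z j‖) (i : ι) (hi : i ∈ s) :
    z i * ‖∑ j ∈ s, z j‖ = ‖z i‖ * ∑ j ∈ s, z j := by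
  set S := ∑ j ∈ s, z j
  have hle : ∀ j ∈ s, (z j * conj S).re ≤ ‖z j‖ * ‖S‖ := fun j _ => by
    simpa using re_le_norm (z j * conj S)
  have hsum : ∑ j ∈ s, (z j * conj S).re = ∑ j ∈ s, ‖z j‖ * ‖S‖ := by
    rw [← re_sum, ← Finset.sum_mul, ← Finset.sum_mul, ← h, mul_conj, normSq_eq_norm_sq]
    exact sq _
  have hre := (Finset.sum_eq_sum_iff_of_le hle).1 hsum i hi
  have hnonneg : 0 ≤ z i * conj S := re_eq_norm.1 (by simpa using hre)
  have hreal : z i * conj S = ‖z i‖ * ‖S‖ := by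
    rw [eq_coe_norm_of_nonneg hnonneg]; simp
  rcases eq_or_ne S 0 with hS | hS
  · simp [hS]
  have hSn : (‖S‖ : ℂ) ≠ 0 := by simpa using hS
  apply mul_left_cancel₀ hSn
  linear_combination S * hreal - z i * (mul_conj' S)

namespace Matrix

variable {ι : Type*} [Fintype ι]

lemma mulVec_mono_of_nonneg {α : Type*} [Semiring α] [PartialOrder α] [IsOrderedRing α]
    {B : Matrix ι ι α} (hB : ∀ i j, 0 ≤ B i j) {x y : ι → α} (h : x ≤ y) : B *ᵥ x ≤ B *ᵥ y :=
  fun i => Finset.sum_le_sum fun j _ => mul_le_mul_of_nonneg_left (h j) (hB i j)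

lemma mulVec_pos_of_pos {α : Type*} [Semiring α] [PartialOrder α] [IsStrictOrderedRing α]
    {B : Matrix ι ι α} (hB : ∀ i j, 0 < B i j) {x : ι → α} (hx : 0 ≤ x) {j : ι} (hj : 0 < x j)
    (i : ι) : 0 < (B *ᵥ x) i :=
  (mul_pos (hB i j) hj).trans_le <|
    Finset.single_le_sum (fun l _ => mul_nonneg (hB i l).le (hx l)) (Finset.mem_univ j)

lemma norm_map_ofReal_mulVec_apply_le {A : Matrix ι ι ℝ} (h0 : ∀ i j, 0 ≤ A i j) (v : ι → ℂ)
    (i : ι) : ‖(A.map ofReal *ᵥ v) i‖ ≤ (A *ᵥ fun j => ‖v j‖) i := by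
  simp only [mulVec, dotProduct, map_apply]
  refine (norm_sum_le _ _).trans (le_of_eq (Finset.sum_congr rfl fun j _ => ?_))
  rw [norm_mul, norm_real, Real.norm_of_nonneg (h0 i j)]

lemma exists_eq_norm_mul_of_norm_mulVec_apply_eq {A : Matrix ι ι ℝ} {i : ι} (hA : ∀ j, 0 < A i j)
    {v : ι → ℂ} (h : ‖(A.map ofReal *ᵥ v) i‖ = (A *ᵥ fun j => ‖v j‖) i)
    (hne : (A.map ofReal *ᵥ v) i ≠ 0) : ∃ u : ℂ, ∀ j, v j = ‖v j‖ * u := by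
  set S := (A.map ofReal *ᵥ v) i
  have hS : S = ∑ j, (A i j : ℂ) * v j := rfl
  have hnorm : ‖∑ j, (A i j : ℂ) * v j‖ = ∑ j, ‖(A i j : ℂ) * v j‖ := by
    simp_rw [← hS, h, norm_mul, norm_real, Real.norm_of_nonneg (hA _).le]; rfl
  have hSn : (‖S‖ : ℂ) ≠ 0 := by simpa using hne
  refine ⟨S / ‖S‖, fun j => ?_⟩
  have := Complex.mul_norm_sum_eq_of_norm_sum_eq hnorm j (Finset.mem_univ j)
  rw [← hS, norm_mul, norm_real, Real.norm_of_nonneg (hA j).le] at this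
  have hAj : (A i j : ℂ) ≠ 0 := ofReal_ne_zero.2 (hA j).ne'
  rw [mul_div_assoc', eq_div_iff hSn]
  apply mul_left_cancel₀ hAj
  push_cast at this
  linear_combination this

lemma eq_norm_of_mulVec_eq_smul_of_eq_norm_mul {A : Matrix ι ι ℝ} (h0 : ∀ i j, 0 ≤ A i j)
    {v : ι → ℂ} {θ u : ℂ} (hv : A.map ofReal *ᵥ v = θ • v) (hvu : ∀ j, v j = ‖v j‖ * u) {j : ι}
    (hj : v j ≠ 0) : θ = ‖θ‖ := by
  have hu : u ≠ 0 := by rintro rfl; exact hj (by simpa using hvu j)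
  have hvj : (‖v j‖ : ℂ) ≠ 0 := by simpa using hj
  have hrow : (((A *ᵥ fun l => ‖v l‖) j : ℝ) : ℂ) = θ * ‖v j‖ := by
    apply mul_right_cancel₀ hu
    calc (((A *ᵥ fun l => ‖v l‖) j : ℝ) : ℂ) * u = ∑ l, (A j l : ℂ) * (‖v l‖ * u) := by
          simp [mulVec, dotProduct, Finset.sum_mul, mul_assoc]
      _ = (A.map ofReal *ᵥ v) j := Finset.sum_congr rfl fun l _ => by rw [← hvu l]; rfl
      _ = θ * ‖v j‖ * u := by
          rw [hv, Pi.smul_apply, smul_eq_mul, mul_assoc]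
          conv_lhs => rw [hvu j]
  have hnonneg : 0 ≤ (A *ᵥ fun l => ‖v l‖) j :=
    Finset.sum_nonneg fun l _ => mul_nonneg (h0 j l) (norm_nonneg _)
  have hθ : θ = (((A *ᵥ fun l => ‖v l‖) j / ‖v j‖ : ℝ) : ℂ) := by
    rw [ofReal_div, hrow, mul_div_cancel_right₀ _ hvj]
  rw [hθ, norm_real, Real.norm_of_nonneg (div_nonneg hnonneg (norm_nonneg _))]

variable [DecidableEq ι]

lemma pow_smul_le_pow_mulVec {α : Type*} [CommSemiring α] [PartialOrder α] [IsOrderedRing α]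
    {B : Matrix ι ι α} (hB : ∀ i j, 0 ≤ B i j) {μ : α} (hμ : 0 ≤ μ) {y : ι → α}
    (h : μ • y ≤ B *ᵥ y) (t : ℕ) : μ ^ t • y ≤ B ^ t *ᵥ y := by
  induction t with
  | zero => simp
  | succ t ih =>
    calc μ ^ (t + 1) • y = μ ^ t • (μ • y) := by rw [pow_succ, mul_smul]
      _ ≤ μ ^ t • (B *ᵥ y) := smul_le_smul_of_nonneg_left h (pow_nonneg hμ t)
      _ = B *ᵥ (μ ^ t • y) := (mulVec_smul B _ y).symm
      _ ≤ B *ᵥ (B ^ t *ᵥ y) := mulVec_mono_of_nonneg hB ih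
      _ = B ^ (t + 1) *ᵥ y := by rw [mulVec_mulVec, pow_succ']

lemma mulVec_eq_smul_of_smul_le {B : Matrix ι ι ℝ} (hB : ∀ i j, 0 < B i j) {ρ : ℝ} (hρ : 0 ≤ ρ)
    (hgrowth : ∀ (y : ι → ℝ) i, ∃ C, ∀ t : ℕ, (B ^ t *ᵥ y) i ≤ C * ρ ^ t) {w : ι → ℝ}
    (hw : 0 ≤ w) (hw0 : w ≠ 0) (hle : ρ • w ≤ B *ᵥ w) : B *ᵥ w = ρ • w := by
  by_contra hne
  obtain ⟨i₀, hi₀⟩ : ∃ i, ρ * w i < (B *ᵥ w) i := by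
    obtain ⟨i, hi⟩ := Function.ne_iff.1 hne
    exact ⟨i, (hle i).lt_of_ne (Ne.symm hi)⟩
  obtain ⟨j₀, hj₀⟩ : ∃ j, 0 < w j := by
    obtain ⟨j, hj⟩ := Function.ne_iff.1 hw0
    exact ⟨j, (hw j).lt_of_ne (Ne.symm hj)⟩
  set y := B *ᵥ w
  have hy : ∀ i, 0 < y i := mulVec_pos_of_pos hB hw hj₀
  have hgap : ∀ i, ρ * y i < (B *ᵥ y) i := fun i => by
    have := mulVec_pos_of_pos hB (sub_nonneg.2 hle) (j := i₀) (by simpa using hi₀) i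
    simpa [y, mulVec_sub, mulVec_smul] using this
  obtain ⟨μ, hρμ, hμ⟩ := exists_gt_smul_le_of_forall_lt hgap
  obtain ⟨C, hC⟩ := hgrowth y i₀
  have := le_of_forall_pow_mul_le_mul_pow (hy i₀) hρ fun t =>
    (pow_smul_le_pow_mulVec (fun i j => (hB i j).le) (hρ.trans hρμ.le) hμ t i₀).trans (hC t)
  linarith

lemma exists_pow_mulVec_eq_of_isRoot_charpoly {K : Type*} [Field K] {M : Matrix ι ι K} {θ : K}
    (hθ : M.charpoly.IsRoot θ) : ∃ v ≠ 0, ∀ t : ℕ, M ^ t *ᵥ v = θ ^ t • v := by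
  have hθ' : Module.End.HasEigenvalue (toLin' M) θ :=
    Module.End.hasEigenvalue_iff_mem_spectrum.2 <| by
      rwa [spectrum_toLin', mem_spectrum_iff_isRoot_charpoly]
  obtain ⟨v, hv⟩ := hθ'.exists_hasEigenvector
  exact ⟨v, hv.2, fun t => by simpa [← toLin'_pow] using hv.pow_apply t⟩

lemma pow_eq_sum_roots_charpoly_pow_smul {K : Type*} [Field K] [IsAlgClosed K] [DecidableEq K]
    {M : Matrix ι ι K} (hsep : M.charpoly.Separable) (t : ℕ) :
    M ^ t = ∑ θ ∈ M.charpoly.roots.toFinset,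
      θ ^ t • aeval M (Lagrange.basis M.charpoly.roots.toFinset id θ) := by
  set s := M.charpoly.roots.toFinset
  have hcard : s.card = M.charpoly.natDegree := by
    rw [Multiset.toFinset_card_of_nodup (nodup_roots hsep),
      ← splits_iff_card_roots.1 (IsAlgClosed.splits M.charpoly)]
  have hinterp : X ^ t %ₘ M.charpoly = Lagrange.interpolate s id (· ^ t) := by
    refine Lagrange.eq_interpolate_of_eval_eq _ (Set.injOn_id _) ?_ fun θ hθ => ?_
    · rw [hcard, ← degree_eq_natDegree (charpoly_monic M).ne_zero]
      exact degree_modByMonic_lt _ (charpoly_monic M)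
    · have hroot : aeval θ M.charpoly = 0 := isRoot_of_mem_roots (Multiset.mem_toFinset.1 hθ)
      simpa using aeval_modByMonic_eq_self_of_root hroot (p := X ^ t)
  calc M ^ t = aeval M (X ^ t %ₘ M.charpoly) := by
        rw [aeval_modByMonic_eq_self_of_root (aeval_self_charpoly M)]; simp
    _ = _ := by
        rw [hinterp, Lagrange.interpolate_apply, map_sum]
        simp [Algebra.smul_def]

lemma exists_norm_pow_mulVec_apply_le {M : Matrix ι ι ℂ} (hsep : M.charpoly.Separable) {ρ : ℝ}
    (hρ : ∀ θ, M.charpoly.IsRoot θ → ‖θ‖ ≤ ρ) (v : ι → ℂ) (i : ι) :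
    ∃ C, ∀ t : ℕ, ‖(M ^ t *ᵥ v) i‖ ≤ C * ρ ^ t := by
  classical
  set s := M.charpoly.roots.toFinset
  refine ⟨∑ θ ∈ s, ‖(aeval M (Lagrange.basis s id θ) *ᵥ v) i‖, fun t => ?_⟩
  rw [pow_eq_sum_roots_charpoly_pow_smul hsep, sum_mulVec, Finset.sum_apply, Finset.sum_mul]
  refine (norm_sum_le _ _).trans (Finset.sum_le_sum fun θ hθ => ?_)
  rw [smul_mulVec, Pi.smul_apply, norm_smul, norm_pow, mul_comm]
  gcongr
  exact hρ θ (isRoot_of_mem_roots (Multiset.mem_toFinset.1 hθ))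

lemma isRoot_charpoly_pow_s1 {K : Type*} [Field K] {M : Matrix ι ι K} {θ : K}
    (hθ : M.charpoly.IsRoot θ) (n : ℕ) : (M ^ n).charpoly.IsRoot (θ ^ n) :=
  mem_spectrum_iff_isRoot_charpoly.1 <|
    spectrum.pow_mem_pow M n (mem_spectrum_iff_isRoot_charpoly.2 hθ)

theorem eq_norm_of_isRoot_charpoly_of_forall_norm_le {A : Matrix ι ι ℝ} (h0 : ∀ i j, 0 ≤ A i j)
    {k : ℕ} (hk : ∀ i j, 0 < (A ^ k) i j) (hsep : (A.map ofReal).charpoly.Separable) {θ : ℂ}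
    (hθ : (A.map ofReal).charpoly.IsRoot θ)
    (hmax : ∀ η, (A.map ofReal).charpoly.IsRoot η → ‖η‖ ≤ ‖θ‖) : θ = ‖θ‖ := by
  rcases eq_or_ne θ 0 with rfl | hθ0
  · simp
  obtain ⟨v, hv0, hv⟩ := exists_pow_mulVec_eq_of_isRoot_charpoly hθ
  have hvk : (A ^ k).map ofReal *ᵥ v = θ ^ k • v := by
    rw [← hv k]; exact congrArg (· *ᵥ v) (Matrix.map_pow A ofRealHom k)
  have hgrowth : ∀ (y : ι → ℝ) i, ∃ C, ∀ t : ℕ, ((A ^ k) ^ t *ᵥ y) i ≤ C * (‖θ‖ ^ k) ^ t := by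
    intro y i
    obtain ⟨C, hC⟩ := exists_norm_pow_mulVec_apply_le hsep hmax (ofReal ∘ y) i
    refine ⟨C, fun t => ?_⟩
    rw [← pow_mul, ← pow_mul]
    calc ((A ^ (k * t)) *ᵥ y) i ≤ ‖(((A ^ (k * t)) *ᵥ y) i : ℂ)‖ := by
          rw [norm_real]; exact Real.le_norm_self _
      _ = ‖((A.map ofReal) ^ (k * t) *ᵥ ofReal ∘ y) i‖ := by
          congr 1
          exact (RingHom.map_mulVec ofRealHom _ y i).trans
            (congrArg (fun M => (M *ᵥ ofReal ∘ y) i) (Matrix.map_pow A ofRealHom _))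
      _ ≤ C * ‖θ‖ ^ (k * t) := hC _
  have hle : ‖θ‖ ^ k • (fun j => ‖v j‖) ≤ A ^ k *ᵥ fun j => ‖v j‖ := fun i => by
    simpa [hvk, norm_pow] using norm_map_ofReal_mulVec_apply_le (pow_apply_nonneg h0 k) v i
  have heq := mulVec_eq_smul_of_smul_le hk (by positivity) hgrowth (fun j => norm_nonneg (v j))
    (fun h => hv0 (funext fun j => norm_eq_zero.1 (congrFun h j))) hle
  obtain ⟨j, hj⟩ := Function.ne_iff.1 hv0
  obtain ⟨u, hu⟩ := exists_eq_norm_mul_of_norm_mulVec_apply_eq (hk j)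
    (by rw [heq, hvk]; simp [norm_pow])
    (by rw [hvk, Pi.smul_apply, smul_eq_mul]; exact mul_ne_zero (pow_ne_zero k hθ0) hj)
  exact eq_norm_of_mulVec_eq_smul_of_eq_norm_mul h0 (by simpa using hv 1) hu hj

theorem exists_isRoot_charpoly_forall_norm_lt [Nonempty ι] {A : Matrix ι ι ℝ}
    (h0 : ∀ i j, 0 ≤ A i j) (hprim : ∃ k : ℕ, ∀ i j, 0 < (A ^ k) i j)
    (hsep : (A.map ofReal).charpoly.Separable) :
    ∃ r : ℝ, (A.map ofReal).charpoly.IsRoot r ∧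
      ∀ θ, (A.map ofReal).charpoly.IsRoot θ → θ ≠ r → ‖θ‖ < r := by
  obtain ⟨k, hk⟩ := hprim
  set p := (A.map ofReal).charpoly
  have hp0 : p ≠ 0 := (charpoly_monic _).ne_zero
  obtain ⟨θ₀, hθ₀⟩ := IsAlgClosed.exists_root p <| by
    rw [degree_eq_natDegree hp0, charpoly_natDegree_eq_dim]; exact_mod_cast Fintype.card_ne_zero
  obtain ⟨θ, hθ, hmax⟩ := p.roots.toFinset.exists_max_image (‖·‖)
    ⟨θ₀, Multiset.mem_toFinset.2 ((mem_roots hp0).2 hθ₀)⟩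
  have hroot : ∀ η, p.IsRoot η ↔ η ∈ p.roots.toFinset := fun η => by simp [hp0]
  have hperipheral : ∀ η, p.IsRoot η → ‖η‖ = ‖θ‖ → η = ‖θ‖ := fun η hη hηθ =>
    hηθ ▸ eq_norm_of_isRoot_charpoly_of_forall_norm_le h0 hk hsep hη
      fun ζ hζ => hηθ ▸ hmax ζ ((hroot ζ).1 hζ)
  have hθr : θ = ‖θ‖ := hperipheral θ ((hroot θ).2 hθ) rfl
  refine ⟨‖θ‖, hθr ▸ (hroot θ).2 hθ, fun η hη hne => ?_⟩
  exact (hmax η ((hroot η).1 hη)).lt_of_ne fun h => hne (hperipheral η hη h)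

lemma map_intCast_pow {R : Type*} [Ring R] (A : Matrix ι ι ℤ) (n : ℕ) :
    (A ^ n).map (Int.cast : ℤ → R) = A.map Int.cast ^ n :=
  Matrix.map_pow A (Int.castRingHom R) n

lemma charpoly_map_intCast {K : Type*} [CommRing K] [Algebra ℚ K] (A : Matrix ι ι ℤ) :
    (A.map (Int.cast : ℤ → K)).charpoly =
      (A.charpoly.map (Int.castRingHom ℚ)).map (algebraMap ℚ K) := by
  rw [Polynomial.map_map, ← charpoly_map,
    RingHom.ext_int ((algebraMap ℚ K).comp _) (Int.castRingHom K)]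
  rfl

end Matrix

open Matrix in
theorem stmt1 (d : ℕ) (A : Matrix (Fin d) (Fin d) ℤ)
    (hnonneg : ∀ i j, 0 ≤ A i j)
    (hprim : ∃ k : ℕ, ∀ i j, 0 < (A ^ k) i j)
    (hirr : Irreducible ((Matrix.charpoly A).map (Int.castRingHom ℚ))) :
    ∀ n : ℕ, 1 ≤ n →
      Irreducible ((Matrix.charpoly (A ^ n)).map (Int.castRingHom ℚ)) := by
  intro n hn
  have hdeg : ∀ M : Matrix (Fin d) (Fin d) ℤ, (M.charpoly.map (Int.castRingHom ℚ)).natDegree = d :=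
    fun M => by rw [(charpoly_monic M).natDegree_map, charpoly_natDegree_eq_dim, Fintype.card_fin]
  have : Nonempty (Fin d) := Fin.pos_iff_nonempty.1 (hdeg A ▸ hirr.natDegree_pos)
  have hroot : ∀ {M : Matrix (Fin d) (Fin d) ℤ} {x : ℂ},
      (M.map (Int.cast : ℤ → ℂ)).charpoly.IsRoot x ↔
        aeval x (M.charpoly.map (Int.castRingHom ℚ)) = 0 := by
    intro M x; rw [charpoly_map_intCast, IsRoot, eval_map_algebraMap]
  have hAℂ : (A.map (Int.cast : ℤ → ℝ)).map ofReal = A.map (Int.cast : ℤ → ℂ) := by ext; simp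
  obtain ⟨r, hr, hdom⟩ := exists_isRoot_charpoly_forall_norm_lt (A := A.map Int.cast)
    (fun i j => Int.cast_nonneg (hnonneg i j))
    (hprim.imp fun k hk i j => by rw [← map_intCast_pow, map_apply]; exact Int.cast_pos.2 (hk i j))
    (by rw [hAℂ, charpoly_map_intCast]; exact hirr.separable.map)
  rw [hAℂ] at hr hdom
  have hmin : minpoly ℚ (r : ℂ) = A.charpoly.map (Int.castRingHom ℚ) :=
    (minpoly.eq_of_irreducible_of_monic hirr (hroot.1 hr) ((charpoly_monic A).map _)).symm
  have hsep : IsSeparable ℚ (r : ℂ) := by rw [IsSeparable, hmin]; exact hirr.separable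
  have hdegn : (minpoly ℚ ((r : ℂ) ^ n)).natDegree = d := by
    rw [minpoly.natDegree_pow_eq_of_forall_norm_lt hsep (by omega) fun β hβ hne =>
      (hdom β (hroot.2 (hmin ▸ hβ)) hne).trans_le (by simpa using le_abs_self r), hmin, hdeg]
  have hrootn : aeval ((r : ℂ) ^ n) ((A ^ n).charpoly.map (Int.castRingHom ℚ)) = 0 :=
    hroot.1 (map_intCast_pow (R := ℂ) A n ▸ isRoot_charpoly_pow_s1 hr n)
  rw [eq_of_monic_of_dvd_of_natDegree_le (minpoly.monic (hsep.isIntegral.pow n))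
    ((charpoly_monic _).map _) (minpoly.dvd ℚ _ hrootn) (by rw [hdeg, hdegn])]
  exact minpoly.irreducible (hsep.isIntegral.pow n)
end

section
/- For every integer n ≥ 1, the largest real root θ₁ of p_n(x) = x⁴ − (n+6)x³ + (10+n)x² − (n+6)x + 1 is a Salem number: θ₁ > 1, 1/θ₁ is a root, and all other roots of p_n lie on the unit circle (and there is at least one root on the unit circle). -/
/-! Substituting `y = x + x⁻¹` turns `p_n` into the trace quadratic `y² - (n+6) y + (n+8)`,
which takes the value `-n ≤ 0` at `y = 2` and a positive value at `y = -2`. Hence one root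
`a = θ + θ⁻¹` exceeds `2`, giving the real roots `θ > 1` and `θ⁻¹`, while the other root `b`
lies in `[-2, 2]`, and every root of `x² - b x + 1` then lies on the unit circle. -/

theorem sq_sub_add_inv_mul_add_one {K : Type*} [Field K] {θ : K} (hθ : θ ≠ 0) (x : K) :
    x ^ 2 - (θ + θ⁻¹) * x + 1 = (x - θ) * (x - θ⁻¹) := by
  field_simp
  ring

theorem exists_one_lt_add_inv_eq {y : ℝ} (hy : 2 < y) : ∃ θ : ℝ, 1 < θ ∧ θ + θ⁻¹ = y := by
  set s := √(y ^ 2 - 4)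
  have hs : s ^ 2 = y ^ 2 - 4 := Real.sq_sqrt (by nlinarith)
  have hmul : (y + s) / 2 * ((y - s) / 2) = 1 := by linear_combination -hs / 4
  refine ⟨(y + s) / 2, by linarith [Real.sqrt_nonneg (y ^ 2 - 4)], ?_⟩
  rw [inv_eq_of_mul_eq_one_right hmul]
  ring

theorem exists_sq_sub_mul_add_one_eq_zero {K : Type*} [Field K] [IsAlgClosed K] [NeZero (2 : K)]
    (b : K) : ∃ z : K, z ^ 2 - b * z + 1 = 0 := by
  obtain ⟨z, hz⟩ := exists_quadratic_eq_zero one_ne_zero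
    (IsAlgClosed.exists_eq_mul_self (discrim 1 (-b) 1))
  exact ⟨z, by linear_combination hz⟩

theorem Complex.norm_eq_one_of_sq_sub_mul_add_one_eq_zero {b : ℝ} (hb : |b| ≤ 2) {z : ℂ}
    (hz : z ^ 2 - b * z + 1 = 0) : ‖z‖ = 1 := by
  have hre : z.re ^ 2 - z.im ^ 2 - b * z.re + 1 = 0 := by
    simpa [pow_two] using congrArg Complex.re hz
  have him : z.im * (2 * z.re - b) = 0 := by
    have := congrArg Complex.im hz
    simp [pow_two] at this
    linear_combination this
  have hb_eq : b = 2 * z.re := by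
    rcases mul_eq_zero.1 him with him | him
    · -- for a real root, `(2 z - b)² = b² - 4 ≤ 0`
      rw [him] at hre
      have hb2 : b ^ 2 ≤ 4 := by nlinarith [sq_abs b, abs_nonneg b]
      have hsq : (2 * z.re - b) ^ 2 = 0 := by nlinarith [sq_nonneg (2 * z.re - b)]
      linarith [pow_eq_zero_iff (n := 2) two_ne_zero |>.1 hsq]
    · linarith
  have hnormSq : z.re ^ 2 + z.im ^ 2 = 1 := by
    subst hb_eq
    linarith
  rw [Complex.norm_def, Complex.normSq_apply, ← pow_two, ← pow_two, hnormSq, Real.sqrt_one]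

theorem exists_trace_roots {c : ℝ} (hc : 0 ≤ c) :
    ∃ a b : ℝ, a + b = c + 6 ∧ a * b = c + 8 ∧ 2 < a ∧ |b| ≤ 2 := by
  set s := √(c ^ 2 + 8 * c + 4)
  have hs : s ^ 2 = c ^ 2 + 8 * c + 4 := Real.sq_sqrt (by positivity)
  have hs_lb : c + 2 ≤ s := Real.le_sqrt_of_sq_le (by nlinarith)
  have hs_ub : s ≤ c + 10 := by nlinarith [Real.sqrt_nonneg (c ^ 2 + 8 * c + 4)]
  refine ⟨(c + 6 + s) / 2, (c + 6 - s) / 2, by ring, by linear_combination -hs / 4, by linarith,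
    abs_le.2 ⟨by linarith, by linarith⟩⟩

def salemQuartic {R : Type*} [Ring R] (n : ℕ) (x : R) : R :=
  x ^ 4 - (n + 6) * x ^ 3 + (10 + n) * x ^ 2 - (n + 6) * x + 1

theorem salemQuartic_ofReal (n : ℕ) (x : ℝ) : salemQuartic n (x : ℂ) = salemQuartic n x := by
  simp [salemQuartic]

theorem salemQuartic_eq_mul {n : ℕ} {θ b : ℝ} (hθ : θ ≠ 0) (hsum : θ + θ⁻¹ + b = n + 6)
    (hprod : (θ + θ⁻¹) * b = n + 8) (z : ℂ) :
    salemQuartic n z = (z - θ) * (z - (θ : ℂ)⁻¹) * (z ^ 2 - b * z + 1) := by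
  have hθ' : (θ : ℂ) ≠ 0 := Complex.ofReal_ne_zero.2 hθ
  have hsum' : (θ : ℂ) + (θ : ℂ)⁻¹ + b = n + 6 := by exact_mod_cast hsum
  have hprod' : ((θ : ℂ) + (θ : ℂ)⁻¹) * b = n + 8 := by exact_mod_cast hprod
  rw [← sq_sub_add_inv_mul_add_one hθ', salemQuartic, ← hsum']
  linear_combination (-z ^ 2) * hprod'

theorem stmt12_general (n : ℕ) :
    ∃ θ : ℝ, 1 < θ ∧
      (θ ^ 4 - (n + 6) * θ ^ 3 + (10 + n) * θ ^ 2 - (n + 6) * θ + 1 = 0) ∧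
      ((1/θ) ^ 4 - (n + 6) * (1/θ) ^ 3 + (10 + n) * (1/θ) ^ 2 - (n + 6) * (1/θ) + 1 = 0) ∧
      (∀ x : ℝ, x ^ 4 - (n + 6) * x ^ 3 + (10 + n) * x ^ 2 - (n + 6) * x + 1 = 0 → x ≤ θ) ∧
      (∀ z : ℂ, z ^ 4 - (n + 6) * z ^ 3 + (10 + n) * z ^ 2 - (n + 6) * z + 1 = 0 →
        z ≠ (θ : ℂ) → z ≠ ((1/θ : ℝ) : ℂ) → ‖z‖ = 1) ∧
      (∃ z : ℂ, z ^ 4 - (n + 6) * z ^ 3 + (10 + n) * z ^ 2 - (n + 6) * z + 1 = 0 ∧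
        ‖z‖ = 1) := by
  obtain ⟨a, b, hsum, hprod, ha, hb⟩ := exists_trace_roots (Nat.cast_nonneg (α := ℝ) n)
  obtain ⟨θ, hθ, rfl⟩ := exists_one_lt_add_inv_eq ha
  have hθ0 : θ ≠ 0 := by positivity
  have hfac := salemQuartic_eq_mul hθ0 hsum hprod
  have hreal : ∀ x : ℝ, salemQuartic n x = 0 ↔ salemQuartic n (x : ℂ) = 0 := fun x => by
    rw [salemQuartic_ofReal, Complex.ofReal_eq_zero]
  have hcircle : ∀ z : ℂ, salemQuartic n z = 0 → z ≠ θ → z ≠ ((1 / θ : ℝ) : ℂ) → ‖z‖ = 1 := by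
    intro z hz hθz hθz'
    rw [one_div, Complex.ofReal_inv] at hθz'
    rw [hfac] at hz
    simp only [mul_eq_zero, sub_eq_zero, hθz, hθz', false_or] at hz
    exact Complex.norm_eq_one_of_sq_sub_mul_add_one_eq_zero hb hz
  refine ⟨θ, hθ, (hreal θ).2 (by simp [hfac]), (hreal _).2 (by simp [hfac]), ?_, hcircle, ?_⟩
  · intro x hx
    by_contra! hθx
    have hx1 : 1 < x := hθ.trans hθx
    have hθinv : 1 / θ < x := ((div_lt_one (by positivity)).2 hθ).trans hx1
    have := hcircle x ((hreal x).1 hx) (by exact_mod_cast hθx.ne') (by exact_mod_cast hθinv.ne')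
    rw [Complex.norm_real, Real.norm_eq_abs, abs_of_pos (by linarith)] at this
    linarith
  · obtain ⟨z, hz⟩ := exists_sq_sub_mul_add_one_eq_zero (b : ℂ)
    refine ⟨z, ?_, Complex.norm_eq_one_of_sq_sub_mul_add_one_eq_zero hb hz⟩
    change salemQuartic n z = 0
    rw [hfac, hz, mul_zero]

theorem stmt12 (n : ℕ) (hn : 1 ≤ n) :
    ∃ θ : ℝ, 1 < θ ∧
      (θ ^ 4 - (n + 6) * θ ^ 3 + (10 + n) * θ ^ 2 - (n + 6) * θ + 1 = 0) ∧
      ((1/θ) ^ 4 - (n + 6) * (1/θ) ^ 3 + (10 + n) * (1/θ) ^ 2 - (n + 6) * (1/θ) + 1 = 0) ∧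
      (∀ x : ℝ, x ^ 4 - (n + 6) * x ^ 3 + (10 + n) * x ^ 2 - (n + 6) * x + 1 = 0 → x ≤ θ) ∧
      (∀ z : ℂ, z ^ 4 - (n + 6) * z ^ 3 + (10 + n) * z ^ 2 - (n + 6) * z + 1 = 0 →
        z ≠ (θ : ℂ) → z ≠ ((1/θ : ℝ) : ℂ) → ‖z‖ = 1) ∧
      (∃ z : ℂ, z ^ 4 - (n + 6) * z ^ 3 + (10 + n) * z ^ 2 - (n + 6) * z + 1 = 0 ∧
        ‖z‖ = 1) :=
  stmt12_general n
end

section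
/- Let θ₁ ∈ (m, m+1) be the Perron–Frobenius root of p(x) = x³ − (m+1)x² + (m−2)x + m for an integer m ≥ 3. Then p has three real roots: one in (m, m+1), one in (1, 2), and one in (−1, 0), and p is irreducible over ℚ. -/
/-!
The values of `p` at `-1, 0, 1, 2, m, m + 1` alternate in sign, so the intermediate value theorem
gives a root in each of `(-1, 0)`, `(1, 2)` and `(m, m + 1)`; a cubic has no further roots. Since
`p` is monic with integer coefficients, a rational root would be an integer, but each real root
lies strictly between two consecutive integers. A cubic without rational roots is irreducible.
-/

open Polynomial

theorem Polynomial.exists_isRoot_Ioo_of_eval_mul_neg {p : ℝ[X]} {a b : ℝ} (hab : a ≤ b)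
    (h : p.eval a * p.eval b < 0) : ∃ r ∈ Set.Ioo a b, p.IsRoot r := by
  have hcont := p.continuous.continuousOn (s := Set.Icc a b)
  rcases mul_neg_iff.mp h with ⟨ha, hb⟩ | ⟨ha, hb⟩
  · exact intermediate_value_Ioo' hab hcont ⟨hb, ha⟩
  · exact intermediate_value_Ioo hab hcont ⟨ha, hb⟩

theorem Polynomial.mem_of_isRoot_of_natDegree_le_card {R : Type*} [CommRing R] [IsDomain R]
    {p : R[X]} (hp : p ≠ 0) {s : Finset R} (hs : ∀ x ∈ s, p.IsRoot x)
    (hcard : p.natDegree ≤ s.card) {x : R} (hx : p.IsRoot x) : x ∈ s := by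
  classical
  by_contra hxs
  have hsub : (insert x s).val ⊆ p.roots := by
    intro y hy
    rw [mem_roots hp]
    rcases Finset.mem_insert.mp hy with rfl | hy
    exacts [hx, hs y hy]
  have := card_le_degree_of_subset_roots hsub
  rw [Finset.card_insert_of_notMem hxs] at this
  omega

theorem Polynomial.Monic.irreducible_map_rat_of_forall_not_isRoot {p : ℤ[X]} (hp : p.Monic)
    (h2 : 2 ≤ p.natDegree) (h3 : p.natDegree ≤ 3) (hroot : ∀ n : ℤ, ¬ p.IsRoot n) :
    Irreducible (p.map (algebraMap ℤ ℚ)) := by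
  have hdeg := hp.natDegree_map (algebraMap ℤ ℚ)
  rw [(hp.map _).irreducible_iff_roots_eq_zero_of_degree_le_three (hdeg ▸ h2) (hdeg ▸ h3),
    Multiset.eq_zero_iff_forall_notMem]
  intro q hq
  rw [mem_roots (hp.map _).ne_zero, IsRoot, eval_map_algebraMap] at hq
  obtain ⟨n, rfl⟩ := isInteger_of_is_root_of_monic hp hq
  rw [aeval_algebraMap_apply_eq_algebraMap_eval, map_eq_zero_iff _ (algebraMap ℤ ℚ).injective_int]
    at hq
  exact hroot n hq

theorem Int.cast_notMem_Ioo_add_one {α : Type*} [Ring α] [LinearOrder α] [IsStrictOrderedRing α]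
    (n k : ℤ) : (n : α) ∉ Set.Ioo (k : α) (k + 1) := by
  rintro ⟨h₁, h₂⟩
  have h₁ : k < n := by exact_mod_cast h₁
  have h₂ : n < k + 1 := by exact_mod_cast h₂
  omega

/-- The negated characteristic polynomial of the substitution matrix of
`ζ_m : 0 ↦ 0^m 1, 1 ↦ 012, 2 ↦ 1`. -/
noncomputable def zetaPoly (m : ℤ) : ℤ[X] := X ^ 3 - C (m + 1) * X ^ 2 + C (m - 2) * X + C m

theorem aeval_zetaPoly {A : Type*} [CommRing A] (m : ℤ) (x : A) :
    aeval x (zetaPoly m) = x ^ 3 - (m + 1) * x ^ 2 + (m - 2) * x + m := by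
  simp only [zetaPoly, map_add, map_sub, map_mul, map_pow, aeval_X, aeval_C]
  simp

theorem monic_zetaPoly (m : ℤ) : (zetaPoly m).Monic := by
  unfold zetaPoly
  monicity!

theorem natDegree_zetaPoly (m : ℤ) : (zetaPoly m).natDegree = 3 := by
  unfold zetaPoly
  compute_degree!

theorem exists_three_real_roots_zetaPoly (m : ℤ) (hm : 3 ≤ m) :
    ∃ r₁ ∈ Set.Ioo (m : ℝ) (m + 1), ∃ r₂ ∈ Set.Ioo (1 : ℝ) 2, ∃ r₃ ∈ Set.Ioo (-1 : ℝ) 0,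
      aeval r₁ (zetaPoly m) = 0 ∧ aeval r₂ (zetaPoly m) = 0 ∧ aeval r₃ (zetaPoly m) = 0 ∧
      ∀ x : ℝ, aeval x (zetaPoly m) = 0 → x = r₁ ∨ x = r₂ ∨ x = r₃ := by
  set P := (zetaPoly m).map (algebraMap ℤ ℝ)
  have hP (x : ℝ) : P.IsRoot x ↔ aeval x (zetaPoly m) = 0 := by
    rw [IsRoot, eval_map_algebraMap]
  have heval (x : ℝ) : P.eval x = x ^ 3 - (m + 1) * x ^ 2 + (m - 2) * x + m := by
    rw [eval_map_algebraMap, aeval_zetaPoly]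
  have hm' : (3 : ℝ) ≤ m := by exact_mod_cast hm
  obtain ⟨r₁, h₁, e₁⟩ := P.exists_isRoot_Ioo_of_eval_mul_neg (a := m) (b := m + 1) (by linarith)
    (by simp only [heval]; nlinarith)
  obtain ⟨r₂, h₂, e₂⟩ := P.exists_isRoot_Ioo_of_eval_mul_neg (a := 1) (b := 2) (by norm_num)
    (by simp only [heval]; nlinarith)
  obtain ⟨r₃, h₃, e₃⟩ := P.exists_isRoot_Ioo_of_eval_mul_neg (a := -1) (b := 0) (by norm_num)
    (by simp only [heval]; nlinarith)
  refine ⟨r₁, h₁, r₂, h₂, r₃, h₃, (hP _).1 e₁, (hP _).1 e₂, (hP _).1 e₃, fun x hx => ?_⟩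
  have hcard : ({r₁, r₂, r₃} : Finset ℝ).card = 3 :=
    Finset.card_eq_three.2 ⟨r₁, r₂, r₃, by grind, by grind, by grind, rfl⟩
  have hdeg : P.natDegree = 3 := by rw [(monic_zetaPoly m).natDegree_map, natDegree_zetaPoly]
  simpa using P.mem_of_isRoot_of_natDegree_le_card ((monic_zetaPoly m).map _).ne_zero
    (s := {r₁, r₂, r₃}) (by simp only [Finset.mem_insert, Finset.mem_singleton]; grind)
    (by omega) ((hP x).2 hx)

theorem stmt19 (m : ℕ) (hm : 3 ≤ m) :
    (∃ r₁ ∈ Set.Ioo (m : ℝ) (m + 1), ∃ r₂ ∈ Set.Ioo (1 : ℝ) 2, ∃ r₃ ∈ Set.Ioo (-1 : ℝ) 0,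
      (r₁ ^ 3 - (m + 1) * r₁ ^ 2 + (m - 2) * r₁ + m = 0) ∧
      (r₂ ^ 3 - (m + 1) * r₂ ^ 2 + (m - 2) * r₂ + m = 0) ∧
      (r₃ ^ 3 - (m + 1) * r₃ ^ 2 + (m - 2) * r₃ + m = 0) ∧
      (∀ x : ℝ, x ^ 3 - (m + 1) * x ^ 2 + (m - 2) * x + m = 0 →
        x = r₁ ∨ x = r₂ ∨ x = r₃)) ∧
    Irreducible ((X ^ 3 - C ((m : ℚ) + 1) * X ^ 2 + C ((m : ℚ) - 2) * X + C (m : ℚ) :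
      Polynomial ℚ)) := by
  obtain ⟨r₁, h₁, r₂, h₂, r₃, h₃, e₁, e₂, e₃, huniq⟩ :=
    exists_three_real_roots_zetaPoly m (by omega)
  have hmap : (X ^ 3 - C ((m : ℚ) + 1) * X ^ 2 + C ((m : ℚ) - 2) * X + C (m : ℚ) : ℚ[X]) =
      (zetaPoly m).map (algebraMap ℤ ℚ) := by
    simp [zetaPoly, C_ofNat]
  refine ⟨?_, hmap ▸ (monic_zetaPoly m).irreducible_map_rat_of_forall_not_isRoot
    (by simp [natDegree_zetaPoly]) (by simp [natDegree_zetaPoly]) fun n hn => ?_⟩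
  · simp only [aeval_zetaPoly, Int.cast_natCast] at e₁ e₂ e₃ huniq
    exact ⟨r₁, by exact_mod_cast h₁, r₂, h₂, r₃, h₃, e₁, e₂, e₃, huniq⟩
  · have hn : aeval (n : ℝ) (zetaPoly m) = 0 := by
      simpa [hn.eq_zero] using aeval_algebraMap_apply_eq_algebraMap_eval (A := ℝ) n (zetaPoly m)
    rcases huniq _ hn with h | h | h
    · exact Int.cast_notMem_Ioo_add_one n m (h ▸ h₁)
    · exact Int.cast_notMem_Ioo_add_one (α := ℝ) n 1 (by norm_num [h, h₂])
    · exact Int.cast_notMem_Ioo_add_one (α := ℝ) n (-1) (by norm_num [h, h₃])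
end
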